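/- The family of functions F : D³ → closure(D) of the form F(z₁,z₂,z₃) = F₁(F₂(z₁,z₂), z₃) with F₁, F₂ : D² → closure(D) holomorphic is closed under locally uniform limits: if F^{(n)} is a sequence of such functions converging locally uniformly on D³ to F, then F is also of this form (possibly with F₁ or F₂ constant or degenerate). -/

import Mathlib

open Filter

/-- The open unit polydisc in `ℂ^d`. -/
def polydisc (d : ℕ) : Set (Fin d → ℂ) := {z | ∀ j, ‖z j‖ < 1}

/-- `F : 𝔻³ → closure 𝔻` has the composed form
`F(z₁,z₂,z₃) = F₁(F₂(z₁,z₂), z₃)` with `F₁, F₂ : 𝔻² → closure 𝔻`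
holomorphic. -/
def IsComposedForm (F : (Fin 3 → ℂ) → ℂ) : Prop :=
  ∃ F₁ F₂ : (Fin 2 → ℂ) → ℂ,
    DifferentiableOn ℂ F₁ (polydisc 2) ∧ (∀ z ∈ polydisc 2, ‖F₁ z‖ ≤ 1) ∧
    DifferentiableOn ℂ F₂ (polydisc 2) ∧ (∀ z ∈ polydisc 2, ‖F₂ z‖ ≤ 1) ∧
    ∀ z ∈ polydisc 3, F z = F₁ ![F₂ ![z 0, z 1], z 2]

/-!
Compose the inner factor of each approximant with the disc automorphism exchanging `F₂(0)` and
`0`, and the first variable of the outer factor with its inverse, so that the inner factor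
vanishes at the origin. Bounded holomorphic functions on a finite-dimensional ball form a normal
family (Cauchy estimates make them and their derivatives locally equi-Lipschitz), so along an
ultrafilter both factors converge locally uniformly to `G₁, G₂`. Since `G₂(0) = 0`, Schwarz's
lemma keeps `G₂` in the open disc, where `G₁` is continuous, hence `F = G₁(G₂(z₁, z₂), z₃)`.
If instead `|F₂(0)| = 1` along the ultrafilter, then `F₂` is a unimodular constant by the maximum
principle and `F` depends on `z₃` only.
-/

open Metric Set Topology
open scoped NNReal

section CauchyEstimates

variable {E F : Type*} [NormedAddCommGroup E] [NormedSpace ℂ E]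
  [NormedAddCommGroup F] [NormedSpace ℂ F] {f : E → F} {c : E} {R r M : ℝ}

theorem norm_fderiv_le_of_forall_norm_le (hd : DifferentiableOn ℂ f (ball c R)) (hR : 0 < R)
    (hM : ∀ x ∈ ball c R, ‖f x‖ ≤ M) : ‖fderiv ℂ f c‖ ≤ 2 * M / R := by
  refine Complex.norm_fderiv_le_div_of_mapsTo_ball hd (fun x hx => ?_) hR
  rw [mem_closedBall, dist_eq_norm]
  linarith [norm_sub_le (f x) (f c), hM x hx, hM c (mem_ball_self hR)]

theorem norm_sub_le_of_forall_norm_le (hd : DifferentiableOn ℂ f (ball c R)) (hrR : r < R)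
    (hM : ∀ x ∈ ball c R, ‖f x‖ ≤ M) {x y : E} (hx : x ∈ closedBall c r)
    (hy : y ∈ closedBall c r) : ‖f x - f y‖ ≤ 2 * M / (R - r) * ‖x - y‖ := by
  have hball : ∀ z ∈ closedBall c r, ball z (R - r) ⊆ ball c R := fun z hz =>
    ball_subset_ball' (by rw [mem_closedBall] at hz; linarith)
  refine (convex_closedBall c r).norm_image_sub_le_of_norm_fderiv_le (𝕜 := ℂ) (fun z hz => ?_)
    (fun z hz => ?_) hy hx
  · exact hd.differentiableAt (isOpen_ball.mem_nhds (hball z hz (mem_ball_self (by linarith))))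
  · exact norm_fderiv_le_of_forall_norm_le (hd.mono (hball z hz)) (by linarith)
      fun w hw => hM w (hball z hz hw)

theorem norm_fderiv_sub_le_of_forall_norm_le (hd : DifferentiableOn ℂ f (ball c R))
    (hrR : r < R) (hM : ∀ x ∈ ball c R, ‖f x‖ ≤ M) {x y : E} (hx : x ∈ closedBall c r)
    (hy : y ∈ closedBall c r) :
    ‖fderiv ℂ f x - fderiv ℂ f y‖ ≤ 16 * M / (R - r) ^ 2 * ‖x - y‖ := by
  set ρ := (R - r) / 2 with hρ
  have hρ0 : 0 < ρ := by linarith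
  have hmem : ∀ z ∈ closedBall c r, ball z ρ ⊆ closedBall c (r + ρ) := fun z hz w hw => by
    rw [mem_closedBall] at hz ⊢; rw [mem_ball] at hw; linarith [dist_triangle w z c]
  have hopen : ∀ z ∈ closedBall c (r + ρ), ball c R ∈ 𝓝 z := fun z hz =>
    isOpen_ball.mem_nhds (mem_ball.2 (lt_of_le_of_lt (mem_closedBall.1 hz) (by linarith)))
  have hshift : ∀ z ∈ ball y ρ, z + (x - y) ∈ ball x ρ := fun z hz => by
    rwa [mem_ball, dist_eq_norm, show z + (x - y) - x = z - y by abel, ← dist_eq_norm]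
  have hdf : ∀ z ∈ ball y ρ, DifferentiableAt ℂ f z := fun z hz =>
    hd.differentiableAt (hopen z (hmem y hy hz))
  have hdf' : ∀ z ∈ ball y ρ, DifferentiableAt ℂ (fun z => f (z + (x - y))) z := fun z hz =>
    (differentiableAt_comp_add_right _).2 (hd.differentiableAt (hopen _ (hmem x hx (hshift z hz))))
  have hbound : ∀ z ∈ ball y ρ, ‖f (z + (x - y)) - f z‖ ≤ 4 * M / (R - r) * ‖x - y‖ := by
    intro z hz
    have := norm_sub_le_of_forall_norm_le hd (show r + ρ < R by linarith) hM
      (hmem x hx (hshift z hz)) (hmem y hy hz)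
    rwa [add_sub_cancel_left, show 2 * M / (R - (r + ρ)) = 4 * M / (R - r) by
      rw [hρ]; field_simp; ring] at this
  have hcauchy := norm_fderiv_le_of_forall_norm_le
    (fun z hz => ((hdf' z hz).sub (hdf z hz)).differentiableWithinAt) hρ0 hbound
  have hy' := mem_ball_self hρ0 (x := y)
  rwa [fderiv_sub (hdf' y hy') (hdf y hy'), fderiv_comp_add_right, add_sub_cancel,
    show 2 * (4 * M / (R - r) * ‖x - y‖) / ρ = 16 * M / (R - r) ^ 2 * ‖x - y‖ by
      rw [hρ]; field_simp; ring] at hcauchy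

end CauchyEstimates

section Convergence

variable {ι X Y : Type*} [MetricSpace X] [PseudoMetricSpace Y] {l : Filter ι}
  {f : ι → X → Y} {g : X → Y}

theorem TendstoUniformlyOn.of_lipschitzOnWith {K : Set X} (hK : IsCompact K) {C : ℝ≥0}
    (hf : ∀ i, LipschitzOnWith C (f i) K) (hg : ∀ x ∈ K, Tendsto (f · x) l (𝓝 (g x))) :
    TendstoUniformlyOn f g l K := by
  have : CompactSpace K := isCompact_iff_compactSpace.mp hK
  have hequi : Equicontinuous fun i (x : K) => f i x :=
    (LipschitzWith.uniformEquicontinuous _ C fun i => (hf i).to_restrict).equicontinuous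
  rw [tendstoUniformlyOn_iff_tendstoUniformly_comp_coe]
  exact UniformFun.tendsto_iff_tendstoUniformly.1
    ((hequi.tendsto_uniformFun_iff_pi l _).2 (tendsto_pi_nhds.2 fun x => hg x x.2))

theorem tendstoLocallyUniformlyOn_ball_of_lipschitzOnWith [ProperSpace X] {c : X} {R : ℝ}
    (hf : ∀ r < R, ∃ C, ∀ i, LipschitzOnWith C (f i) (closedBall c r))
    (hg : ∀ x ∈ ball c R, Tendsto (f · x) l (𝓝 (g x))) :
    TendstoLocallyUniformlyOn f g l (ball c R) := by
  refine (tendstoLocallyUniformlyOn_iff_forall_isCompact isOpen_ball).2 fun K hKR hK => ?_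
  obtain ⟨r, hrR, hKr⟩ := exists_lt_subset_ball hK.isClosed hKR
  obtain ⟨C, hC⟩ := hf r hrR
  exact .of_lipschitzOnWith hK (fun i => (hC i).mono (hKr.trans ball_subset_closedBall))
    fun x hx => hg x (hKR hx)

end Convergence

theorem IsCompact.exists_tendsto_ultrafilter {ι X : Type*} [TopologicalSpace X] {K : Set X}
    (hK : IsCompact K) (𝒰 : Ultrafilter ι) {u : ι → X} (hu : ∀ i, u i ∈ K) :
    ∃ a ∈ K, Tendsto u 𝒰 (𝓝 a) :=
  hK.ultrafilter_le_nhds (𝒰.map u) <| by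
    rw [Ultrafilter.coe_map, le_principal_iff]
    exact Eventually.of_forall (f := (𝒰 : Filter ι)) hu

section Montel

variable {ι E F : Type*} [NormedAddCommGroup E] [NormedSpace ℂ E] [FiniteDimensional ℂ E]
  [NormedAddCommGroup F] [NormedSpace ℂ F] [FiniteDimensional ℂ F] {c : E} {R M : ℝ}

theorem exists_tendstoLocallyUniformlyOn_of_forall_norm_le (𝒰 : Ultrafilter ι)
    {f : ι → E → F} (hd : ∀ i, DifferentiableOn ℂ (f i) (ball c R))
    (hM : ∀ i, ∀ x ∈ ball c R, ‖f i x‖ ≤ M) :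
    ∃ g : E → F, DifferentiableOn ℂ g (ball c R) ∧ (∀ x ∈ ball c R, ‖g x‖ ≤ M) ∧
      TendstoLocallyUniformlyOn f g 𝒰 (ball c R) := by
  have : ProperSpace E := FiniteDimensional.proper ℂ E
  have : ProperSpace F := FiniteDimensional.proper ℂ F
  have hlim : ∀ x ∈ ball c R, ∃ a ∈ closedBall (0 : F) M, Tendsto (f · x) 𝒰 (𝓝 a) :=
    fun x hx => (isCompact_closedBall 0 M).exists_tendsto_ultrafilter 𝒰
      fun i => mem_closedBall_zero_iff.2 (hM i x hx)
  choose! g hgM hg using hlim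
  have hlim' : ∀ x ∈ ball c R, ∃ L ∈ closedBall (0 : E →L[ℂ] F) (2 * M / (R - dist x c)),
      Tendsto (fun i => fderiv ℂ (f i) x) 𝒰 (𝓝 L) := by
    intro x hx
    have hsub : ball x (R - dist x c) ⊆ ball c R := ball_subset_ball' (by rw [sub_add_cancel])
    exact (isCompact_closedBall _ _).exists_tendsto_ultrafilter 𝒰 fun i =>
      mem_closedBall_zero_iff.2 (norm_fderiv_le_of_forall_norm_le ((hd i).mono hsub)
        (sub_pos.2 (mem_ball.1 hx)) fun y hy => hM i y (hsub hy))
  choose! g' _ hg' using hlim'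
  have hequi : ∀ r < R, ∃ C : ℝ≥0, ∀ i, LipschitzOnWith C (f i) (closedBall c r) :=
    fun r hr => ⟨_, fun i => LipschitzOnWith.of_dist_le' fun x hx y hy => by
      simpa only [dist_eq_norm] using norm_sub_le_of_forall_norm_le (hd i) hr (hM i) hx hy⟩
  have hequi' : ∀ r < R, ∃ C : ℝ≥0, ∀ i, LipschitzOnWith C (fderiv ℂ (f i)) (closedBall c r) :=
    fun r hr => ⟨_, fun i => LipschitzOnWith.of_dist_le' fun x hx y hy => by
      simpa only [dist_eq_norm] using norm_fderiv_sub_le_of_forall_norm_le (hd i) hr (hM i) hx hy⟩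
  have hg'conv := tendstoLocallyUniformlyOn_ball_of_lipschitzOnWith hequi' hg'
  refine ⟨g, fun x hx => ?_, fun x hx => mem_closedBall_zero_iff.1 (hgM x hx),
    tendstoLocallyUniformlyOn_ball_of_lipschitzOnWith hequi hg⟩
  exact (hasFDerivAt_of_tendsto_locally_uniformly_on' isOpen_ball hg'conv hd hg hx
    ).differentiableAt.differentiableWithinAt

end Montel

section MobiusInvolution

open ComplexConjugate

variable {a u : ℂ}

noncomputable def mobius (a u : ℂ) : ℂ := (a - u) / (1 - conj a * u)

theorem one_sub_conj_mul_ne_zero (ha : ‖a‖ < 1) (hu : ‖u‖ ≤ 1) : 1 - conj a * u ≠ 0 := by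
  intro h
  have : ‖conj a * u‖ = 1 := by rw [← sub_eq_zero.1 h, norm_one]
  rw [norm_mul, Complex.norm_conj] at this
  nlinarith [norm_nonneg a, norm_nonneg u]

theorem norm_sub_sq_add_mul_eq_norm_one_sub_conj_mul_sq (a u : ℂ) :
    ‖a - u‖ ^ 2 + (1 - ‖a‖ ^ 2) * (1 - ‖u‖ ^ 2) = ‖1 - conj a * u‖ ^ 2 := by
  simp only [← Complex.normSq_eq_norm_sq, Complex.normSq_apply, Complex.sub_re, Complex.sub_im,
    Complex.mul_re, Complex.mul_im, Complex.conj_re, Complex.conj_im, Complex.one_re,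
    Complex.one_im]
  ring

theorem norm_mobius_le_one (ha : ‖a‖ < 1) (hu : ‖u‖ ≤ 1) : ‖mobius a u‖ ≤ 1 := by
  rw [mobius, norm_div, div_le_one (norm_pos_iff.2 (one_sub_conj_mul_ne_zero ha hu)),
    ← pow_le_pow_iff_left₀ (norm_nonneg _) (norm_nonneg _) two_ne_zero,
    ← norm_sub_sq_add_mul_eq_norm_one_sub_conj_mul_sq]
  have : 0 ≤ (1 - ‖a‖ ^ 2) * (1 - ‖u‖ ^ 2) :=
    mul_nonneg (by nlinarith [norm_nonneg a]) (by nlinarith [norm_nonneg u])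
  linarith

theorem norm_mobius_lt_one (ha : ‖a‖ < 1) (hu : ‖u‖ < 1) : ‖mobius a u‖ < 1 := by
  rw [mobius, norm_div, div_lt_one (norm_pos_iff.2 (one_sub_conj_mul_ne_zero ha hu.le)),
    ← pow_lt_pow_iff_left₀ (norm_nonneg _) (norm_nonneg _) two_ne_zero,
    ← norm_sub_sq_add_mul_eq_norm_one_sub_conj_mul_sq]
  have : 0 < (1 - ‖a‖ ^ 2) * (1 - ‖u‖ ^ 2) :=
    mul_pos (by nlinarith [norm_nonneg a]) (by nlinarith [norm_nonneg u])
  linarith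

theorem mobius_self (a : ℂ) : mobius a a = 0 := by simp [mobius]

theorem mobius_mobius (ha : ‖a‖ < 1) (hu : ‖u‖ ≤ 1) : mobius a (mobius a u) = u := by
  have hd := one_sub_conj_mul_ne_zero ha hu
  have hd' := one_sub_conj_mul_ne_zero ha (norm_mobius_le_one ha hu)
  rw [mobius, div_eq_iff hd', mobius]
  linear_combination (u - a) * mul_inv_cancel₀ hd

theorem differentiableAt_mobius (ha : ‖a‖ < 1) (hu : ‖u‖ ≤ 1) :
    DifferentiableAt ℂ (mobius a) u :=
  ((differentiableAt_const a).sub differentiableAt_id).div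
    ((differentiableAt_const 1).sub (differentiableAt_id.const_mul _))
    (one_sub_conj_mul_ne_zero ha hu)

end MobiusInvolution

theorem polydisc_eq_ball (d : ℕ) : polydisc d = ball 0 1 := by
  ext z
  simp [polydisc, pi_norm_lt_iff one_pos]

theorem isOpen_polydisc (d : ℕ) : IsOpen (polydisc d) := polydisc_eq_ball d ▸ isOpen_ball

theorem zero_mem_polydisc (d : ℕ) : 0 ∈ polydisc d := fun j => by simp

theorem cons_mem_polydisc_two_iff {u v : ℂ} : ![u, v] ∈ polydisc 2 ↔ ‖u‖ < 1 ∧ ‖v‖ < 1 := by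
  simp [polydisc, Fin.forall_fin_two]

theorem cons_mem_polydisc_two_of_mem_polydisc_three {z : Fin 3 → ℂ} (hz : z ∈ polydisc 3) :
    ![z 0, z 1] ∈ polydisc 2 :=
  cons_mem_polydisc_two_iff.2 ⟨hz 0, hz 1⟩

def SchurClass (d : ℕ) : Set ((Fin d → ℂ) → ℂ) :=
  {f | DifferentiableOn ℂ f (polydisc d) ∧ ∀ z ∈ polydisc d, ‖f z‖ ≤ 1}

namespace SchurClass

variable {d : ℕ}

theorem exists_tendstoLocallyUniformlyOn {ι : Type*} (𝒰 : Ultrafilter ι)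
    {f : ι → (Fin d → ℂ) → ℂ} (hf : ∀ i, f i ∈ SchurClass d) :
    ∃ g ∈ SchurClass d, TendstoLocallyUniformlyOn f g 𝒰 (polydisc d) := by
  simp only [SchurClass, polydisc_eq_ball, mem_ofPred_eq] at hf ⊢
  obtain ⟨g, hgd, hgM, hg⟩ := exists_tendstoLocallyUniformlyOn_of_forall_norm_le 𝒰
    (fun i => (hf i).1) fun i => (hf i).2
  exact ⟨g, ⟨hgd, hgM⟩, hg⟩

theorem norm_lt_one_of_map_zero {f : (Fin d → ℂ) → ℂ} (hf : f ∈ SchurClass d) (h0 : f 0 = 0)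
    {z : Fin d → ℂ} (hz : z ∈ polydisc d) : ‖f z‖ < 1 := by
  rw [polydisc_eq_ball] at hz
  refine (Complex.norm_le_norm_of_mapsTo_ball (polydisc_eq_ball d ▸ hf.1) (fun w hw => ?_) h0
    (mem_ball_zero_iff.1 hz)).trans_lt (mem_ball_zero_iff.1 hz)
  exact mem_closedBall_zero_iff.2 (hf.2 w (polydisc_eq_ball d ▸ hw))

theorem eqOn_const_of_norm_eq_one {f : (Fin d → ℂ) → ℂ} (hf : f ∈ SchurClass d) {c : Fin d → ℂ}
    (hc : c ∈ polydisc d) (h : ‖f c‖ = 1) : EqOn f (Function.const _ (f c)) (polydisc d) :=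
  Complex.eqOn_of_isPreconnected_of_isMaxOn_norm
    (polydisc_eq_ball d ▸ convex_ball 0 1).isPreconnected (isOpen_polydisc d) hf.1 hc
    fun x hx => (hf.2 x hx).trans h.ge

end SchurClass

theorem isComposedForm_iff {F : (Fin 3 → ℂ) → ℂ} :
    IsComposedForm F ↔ ∃ F₁ ∈ SchurClass 2, ∃ F₂ ∈ SchurClass 2,
      ∀ z ∈ polydisc 3, F z = F₁ ![F₂ ![z 0, z 1], z 2] :=
  ⟨fun ⟨F₁, F₂, h₁, h₁', h₂, h₂', h⟩ => ⟨F₁, ⟨h₁, h₁'⟩, F₂, ⟨h₂, h₂'⟩, h⟩,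
    fun ⟨F₁, ⟨h₁, h₁'⟩, F₂, ⟨h₂, h₂'⟩, h⟩ => ⟨F₁, F₂, h₁, h₁', h₂, h₂', h⟩⟩

theorem exists_factors_map_zero_of_norm_lt_one {F₁ F₂ : (Fin 2 → ℂ) → ℂ}
    (hF₁ : F₁ ∈ SchurClass 2) (hF₂ : F₂ ∈ SchurClass 2) (ha : ‖F₂ 0‖ < 1) :
    ∃ G₁ ∈ SchurClass 2, ∃ G₂ ∈ SchurClass 2, G₂ 0 = 0 ∧
      ∀ v ∈ polydisc 2, ∀ t, F₁ ![F₂ v, t] = G₁ ![G₂ v, t] := by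
  set a := F₂ 0
  have hmaps : MapsTo (fun w => ![mobius a (w 0), w 1]) (polydisc 2) (polydisc 2) :=
    fun w hw => cons_mem_polydisc_two_iff.2 ⟨norm_mobius_lt_one ha (hw 0), hw 1⟩
  have hdiff : DifferentiableOn ℂ (fun w : Fin 2 → ℂ => ![mobius a (w 0), w 1]) (polydisc 2) := by
    intro w hw
    refine differentiableWithinAt_pi.2 fun j => ?_
    fin_cases j <;> simp only [Fin.zero_eta, Fin.mk_one, Matrix.cons_val_zero, Matrix.cons_val_one]
    · exact DifferentiableAt.comp_differentiableWithinAt (f := fun w : Fin 2 → ℂ => w 0) w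
        (differentiableAt_mobius ha (hw 0).le) (by fun_prop)
    · fun_prop
  refine ⟨fun w => F₁ ![mobius a (w 0), w 1],
    ⟨hF₁.1.comp hdiff hmaps, fun w hw => hF₁.2 _ (hmaps hw)⟩, fun w => mobius a (F₂ w), ⟨fun w hw => ?_, fun w hw => norm_mobius_le_one ha (hF₂.2 w hw)⟩,
    mobius_self a, fun v hv t => ?_⟩
  · exact (differentiableAt_mobius ha (hF₂.2 w hw)).comp_differentiableWithinAt w (hF₂.1 w hw)
  · simp [mobius_mobius ha (hF₂.2 v hv)]

/-- Only the values of `F₁` on the open bidisc are constrained, while `F₂` may take unimodular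
values: with `F₂ = 1`, the composition only uses `F₁` at the points `(1, z₃)`, where it can be
anything. -/
theorem isComposedForm_of_forall_eq {F : (Fin 3 → ℂ) → ℂ} (g : ℂ → ℂ)
    (h : ∀ z ∈ polydisc 3, F z = g (z 2)) : IsComposedForm F := by
  classical
  have h1 : ∀ t, ![1, t] ∉ polydisc 2 := fun t ht => by
    simp [cons_mem_polydisc_two_iff] at ht
  refine isComposedForm_iff.2 ⟨fun w => if w ∈ polydisc 2 then 0 else g (w 1), ⟨?_, ?_⟩,
    fun _ => 1, ⟨differentiableOn_const 1, fun _ _ => by simp⟩, fun z hz => ?_⟩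
  · exact (differentiableOn_const 0).congr fun w hw => if_pos hw
  · intro w hw; simp [hw]
  · simp [h1, h z hz]

section Limits

variable {ι : Type*} (𝒰 : Ultrafilter ι) {Fseq : ι → (Fin 3 → ℂ) → ℂ} {F : (Fin 3 → ℂ) → ℂ}
  {F₁ F₂ : ι → (Fin 2 → ℂ) → ℂ}

theorem isComposedForm_of_tendsto_of_map_zero (hF₁ : ∀ i, F₁ i ∈ SchurClass 2)
    (hF₂ : ∀ i, F₂ i ∈ SchurClass 2) (h0 : ∀ᶠ i in 𝒰, F₂ i 0 = 0)
    (hcomp : ∀ᶠ i in 𝒰, ∀ z ∈ polydisc 3, Fseq i z = F₁ i ![F₂ i ![z 0, z 1], z 2])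
    (hF : ∀ z ∈ polydisc 3, Tendsto (Fseq · z) 𝒰 (𝓝 (F z))) : IsComposedForm F := by
  obtain ⟨G₁, hG₁, hlim₁⟩ := SchurClass.exists_tendstoLocallyUniformlyOn 𝒰 hF₁
  obtain ⟨G₂, hG₂, hlim₂⟩ := SchurClass.exists_tendstoLocallyUniformlyOn 𝒰 hF₂
  have hG₂0 : G₂ 0 = 0 := tendsto_nhds_unique (hlim₂.tendsto_at (zero_mem_polydisc 2))
    (tendsto_const_nhds.congr' (h0.mono fun i hi => hi.symm))
  refine isComposedForm_iff.2 ⟨G₁, hG₁, G₂, hG₂, fun z hz => tendsto_nhds_unique (hF z hz) ?_⟩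
  have hv := cons_mem_polydisc_two_of_mem_polydisc_three hz
  have hp : ![G₂ ![z 0, z 1], z 2] ∈ polydisc 2 :=
    cons_mem_polydisc_two_iff.2 ⟨SchurClass.norm_lt_one_of_map_zero hG₂ hG₂0 hv, hz 2⟩
  refine (hlim₁.tendsto_comp (hG₁.1.continuousOn _ hp) hp ?_).congr'
    (hcomp.mono fun i hi => (hi z hz).symm)
  rw [(isOpen_polydisc 2).nhdsWithin_eq hp]
  exact (hlim₂.tendsto_at hv).matrixVecCons tendsto_const_nhds

theorem isComposedForm_of_tendsto_of_norm_lt_one (hF₁ : ∀ i, F₁ i ∈ SchurClass 2)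
    (hF₂ : ∀ i, F₂ i ∈ SchurClass 2) (hF₂0 : ∀ᶠ i in 𝒰, ‖F₂ i 0‖ < 1)
    (hcomp : ∀ i, ∀ z ∈ polydisc 3, Fseq i z = F₁ i ![F₂ i ![z 0, z 1], z 2])
    (hF : ∀ z ∈ polydisc 3, Tendsto (Fseq · z) 𝒰 (𝓝 (F z))) : IsComposedForm F := by
  have hnormal : ∀ i, ∃ G₁ ∈ SchurClass 2, ∃ G₂ ∈ SchurClass 2, ‖F₂ i 0‖ < 1 →
      G₂ 0 = 0 ∧ ∀ v ∈ polydisc 2, ∀ t, F₁ i ![F₂ i v, t] = G₁ ![G₂ v, t] := fun i => by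
    by_cases hi : ‖F₂ i 0‖ < 1
    · obtain ⟨G₁, hG₁, G₂, hG₂, h⟩ := exists_factors_map_zero_of_norm_lt_one (hF₁ i) (hF₂ i) hi
      exact ⟨G₁, hG₁, G₂, hG₂, fun _ => h⟩
    · exact ⟨F₁ i, hF₁ i, F₂ i, hF₂ i, fun h => absurd h hi⟩
  choose G₁ hG₁ G₂ hG₂ hG using hnormal
  refine isComposedForm_of_tendsto_of_map_zero 𝒰 hG₁ hG₂ (hF₂0.mono fun i hi => (hG i hi).1)
    (hF₂0.mono fun i hi z hz => ?_) hF
  rw [hcomp i z hz, (hG i hi).2 _ (cons_mem_polydisc_two_of_mem_polydisc_three hz)]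

theorem isComposedForm_of_tendsto_of_norm_eq_one (hF₂ : ∀ i, F₂ i ∈ SchurClass 2)
    (hF₂0 : ∀ᶠ i in 𝒰, ‖F₂ i 0‖ = 1)
    (hcomp : ∀ i, ∀ z ∈ polydisc 3, Fseq i z = F₁ i ![F₂ i ![z 0, z 1], z 2])
    (hF : ∀ z ∈ polydisc 3, Tendsto (Fseq · z) 𝒰 (𝓝 (F z))) : IsComposedForm F := by
  refine isComposedForm_of_forall_eq (fun t => F ![0, 0, t]) fun z hz => ?_
  have hz' : ![0, 0, z 2] ∈ polydisc 3 := fun j => by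
    fin_cases j <;> simp [hz 2]
  refine tendsto_nhds_unique (hF z hz) ((hF _ hz').congr' (hF₂0.mono fun i hi => ?_))
  have hconst := SchurClass.eqOn_const_of_norm_eq_one (hF₂ i) (zero_mem_polydisc 2) hi
  dsimp only
  rw [hcomp i z hz, hcomp i _ hz', hconst (cons_mem_polydisc_two_of_mem_polydisc_three hz),
    hconst (cons_mem_polydisc_two_of_mem_polydisc_three hz')]
  simp

end Limits

/-- The family of composed-form functions is closed under locally uniform
limits on the tridisc. -/
theorem isComposedForm_closed_under_locally_uniform_limits
    (Fseq : ℕ → (Fin 3 → ℂ) → ℂ)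
    (hFseq : ∀ n, IsComposedForm (Fseq n))
    (F : (Fin 3 → ℂ) → ℂ)
    (hlim : TendstoLocallyUniformlyOn Fseq F atTop (polydisc 3)) :
    IsComposedForm F := by
  choose F₁ hF₁ F₂ hF₂ hcomp using fun n => isComposedForm_iff.1 (hFseq n)
  let 𝒰 : Ultrafilter ℕ := .of atTop
  have hF : ∀ z ∈ polydisc 3, Tendsto (Fseq · z) 𝒰 (𝓝 (F z)) := fun z hz =>
    (hlim.tendsto_at hz).mono_left (Ultrafilter.of_le _)
  by_cases hF₂0 : ∀ᶠ n in 𝒰, ‖F₂ n 0‖ < 1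
  · exact isComposedForm_of_tendsto_of_norm_lt_one 𝒰 hF₁ hF₂ hF₂0 hcomp hF
  · refine isComposedForm_of_tendsto_of_norm_eq_one 𝒰 hF₂ ?_ hcomp hF
    exact (Ultrafilter.eventually_not.2 hF₂0).mono fun n hn =>
      le_antisymm ((hF₂ n).2 0 (zero_mem_polydisc 2)) (not_lt.1 hn)
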